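/- Let n ≥ 3 be a natural number with n ≠ 7. Then n and n+2 are both prime if and only if the quantity 4·(n−3)! + n + 2 is divisible by n but not by n+2. -/
import Mathlib

open Nat

lemma aux_mul_dvd_factorial {a b k : ℕ} (ha : 0 < a) (hab : a < b) (hbk : b ≤ k) :
    a * b ∣ k ! := by
  obtain ⟨c, rfl⟩ : ∃ c, b = c + 1 := ⟨b - 1, by omega⟩
  have h1 : a ∣ c ! := Nat.dvd_factorial ha (by omega)
  have h2 : a * (c + 1) ∣ (c + 1)! := by
    rw [Nat.factorial_succ, mul_comm a (c+1)]
    exact Nat.mul_dvd_mul_left _ h1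
  exact h2.trans (Nat.factorial_dvd_factorial hbk)

lemma aux_sq_dvd_factorial {p k : ℕ} (hp : 0 < p) (hk : 2 * p ≤ k) :
    p * p ∣ k ! := by
  have : p * (2 * p) ∣ k ! := aux_mul_dvd_factorial hp (by omega) hk
  exact (Dvd.intro 2 (by ring)).trans this

-- composite m ≥ 6 divides (m-3)!
lemma aux_comp_dvd₁ {m : ℕ} (hm : 6 ≤ m) (hnp : ¬ m.Prime) : m ∣ (m - 3)! := by
  obtain ⟨q, hq⟩ := Nat.minFac_dvd m
  have hpp : Nat.Prime m.minFac := Nat.minFac_prime (by omega)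
  have hsq : m.minFac * m.minFac ≤ m := by
    have := Nat.minFac_sq_le_self (show 0 < m by omega) hnp
    rwa [pow_two] at this
  have hp2 := hpp.two_le
  set p := m.minFac with hp
  clear_value p
  have hq0 : 0 < q := by nlinarith
  have hpq : p ≤ q := by nlinarith
  rcases eq_or_lt_of_le hpq with h | h
  · -- m = p*p, p ≥ 3 since m ≥ 6
    subst h
    have hp3 : 3 ≤ p := by nlinarith
    have h1 : 2 * p + 3 ≤ m := by nlinarith
    have := aux_sq_dvd_factorial (show 0 < p by omega) (show 2*p ≤ m - 3 by omega)
    rwa [← hq] at this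
  · have hq3 : q + 3 ≤ m := by nlinarith
    have := aux_mul_dvd_factorial (show 0 < p by omega) h (show q ≤ m - 3 by omega)
    rwa [← hq] at this

-- odd composite m ≠ 9 divides (m-5)!
lemma aux_comp_dvd₂ {m : ℕ} (hm : Odd m) (h2 : 2 ≤ m) (h9 : m ≠ 9)
    (hnp : ¬ m.Prime) : m ∣ (m - 5)! := by
  obtain ⟨q, hq⟩ := Nat.minFac_dvd m
  have hpp : Nat.Prime m.minFac := Nat.minFac_prime (by omega)
  have hsq : m.minFac * m.minFac ≤ m := by
    have := Nat.minFac_sq_le_self (show 0 < m by omega) hnp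
    rwa [pow_two] at this
  have hp2 := hpp.two_le
  have hp3 : 3 ≤ m.minFac := by
    rcases hp2.lt_or_eq with h | h
    · omega
    · exfalso
      have : (2:ℕ) ∣ m := h ▸ Nat.minFac_dvd m
      rcases hm with ⟨j, hj⟩; omega
  set p := m.minFac with hp
  clear_value p
  have hq0 : 0 < q := by nlinarith
  have hpq : p ≤ q := by nlinarith
  rcases eq_or_lt_of_le hpq with h | h
  · subst h
    have hp5 : 5 ≤ p := by
      rcases (show p = 3 ∨ 4 ≤ p by omega) with h | h
      · exfalso; apply h9; rw [hq, h]
      · rcases (show p = 4 ∨ 5 ≤ p by omega) with h' | h'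
        · exfalso; rw [h'] at hpp; norm_num at hpp
        · exact h'
    have h1 : 2 * p + 5 ≤ m := by nlinarith
    have := aux_sq_dvd_factorial (show 0 < p by omega) (show 2*p ≤ m - 5 by omega)
    rwa [← hq] at this
  · have hq5 : q + 5 ≤ m := by nlinarith
    have := aux_mul_dvd_factorial (show 0 < p by omega) h (show q ≤ m - 5 by omega)
    rwa [← hq] at this

theorem tst : True := trivial

theorem stmt_8 (n : ℕ) (h3 : 3 ≤ n) (h7 : n ≠ 7) :
    (Nat.Prime n ∧ Nat.Prime (n + 2)) ↔
      (n ∣ 4 * Nat.factorial (n - 3) + n + 2 ∧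
       ¬ ((n + 2) ∣ 4 * Nat.factorial (n - 3) + n + 2)) := by
  obtain ⟨m, rfl⟩ : ∃ m, n = m + 3 := ⟨n - 3, by omega⟩
  have hsub : m + 3 - 3 = m := by omega
  rw [hsub]
  constructor
  · rintro ⟨hp, hq⟩
    constructor
    · -- Wilson's theorem direction
      have hw : ((m + 3 - 1)! : ZMod (m+3)) = -1 :=
        (Nat.prime_iff_fac_equiv_neg_one (by omega)).mp hp
      have hw' : (m + 3) ∣ (m + 2)! + 1 := by
        have : (((m + 2)! + 1 : ℕ) : ZMod (m+3)) = 0 := by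
          push_cast
          rw [show m + 3 - 1 = m + 2 by omega] at hw
          rw [hw]; ring
        exact (ZMod.natCast_eq_zero_iff _ _).mp this
      have hfac : (m + 2)! + 1 = (m * (m + 3)) * m ! + (2 * m ! + 1) := by
        rw [show m + 2 = (m+1) + 1 from rfl, Nat.factorial_succ, Nat.factorial_succ]
        ring
      rw [hfac] at hw'
      have hdd : (m + 3) ∣ (m * (m + 3)) * m ! := ⟨m * m !, by ring⟩
      have key : (m + 3) ∣ 2 * m ! + 1 := (Nat.dvd_add_right hdd).mp hw'
      have key2 : (m + 3) ∣ 4 * m ! + 2 := by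
        have := Dvd.dvd.mul_left key 2
        rwa [show 2 * (2 * m ! + 1) = 4 * m ! + 2 by ring] at this
      have : 4 * m ! + (m + 3) + 2 = (4 * m ! + 2) + (m + 3) := by ring
      rw [this]
      exact Nat.dvd_add key2 dvd_rfl
    · intro hd
      have h1 : (m + 3 + 2) ∣ 4 * m ! := by
        have h1' : (m + 3 + 2) ∣ (m + 3 + 2) := dvd_rfl
        have : 4 * m ! + (m + 3) + 2 = 4 * m ! + (m + 3 + 2) := by ring
        rw [this] at hd
        simpa using Nat.dvd_sub hd h1'
      rcases hq.dvd_mul.mp h1 with h | h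
      · have := Nat.le_of_dvd (by norm_num) h
        omega
      · have := (Nat.Prime.dvd_factorial hq).mp h
        omega
  · rintro ⟨hd1, hd2⟩
    have hp : Nat.Prime (m + 3) := by
      by_contra hnp
      rcases m with _ | _ | _ | m
      · exact hnp (by norm_num)
      · norm_num [Nat.factorial] at hd1
      · exact hnp (by norm_num)
      · have hdvd : (m + 6) ∣ (m + 6 - 3)! := aux_comp_dvd₁ (by omega) hnp
        rw [show m + 6 - 3 = m + 3 + 3 - 3 by omega, show m + 3 + 3 - 3 = m + 3 by omega] at hdvd
        have h4 : (m + 6) ∣ 4 * (m + 3)! := Dvd.dvd.mul_left hdvd 4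
        have : (m + 3 + 3) ∣ 2 := by
          have heq : 4 * (m+3)! + (m+3+3) + 2 = (4 * (m+3)! + (m+3+3)) + 2 := by ring
          rw [heq] at hd1
          refine (Nat.dvd_add_right ?_).mp hd1
          exact Nat.dvd_add (by rwa [show m+3+3 = m+6 from rfl]) dvd_rfl
        have := Nat.le_of_dvd (by norm_num) this
        omega
    refine ⟨hp, ?_⟩
    by_contra hnp2
    apply hd2
    have hodd : Odd (m + 3) := hp.odd_of_ne_two (by omega)
    have hodd5 : Odd (m + 3 + 2) := by rcases hodd with ⟨j, hj⟩; exact ⟨j+1, by omega⟩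
    have hdvd : (m + 5) ∣ (m + 5 - 5)! :=
      aux_comp_dvd₂ (by rwa [show m + 5 = m + 3 + 2 by ring] ) (by omega) (by omega) (by rwa [show m + 5 = m + 3 + 2 by ring])
    rw [show m + 5 - 5 = m by omega] at hdvd
    have h4 : (m + 5) ∣ 4 * m ! := Dvd.dvd.mul_left hdvd 4
    have : 4 * m ! + (m + 3) + 2 = 4 * m ! + (m + 5) := by ring
    rw [this]
    exact Nat.dvd_add (by rwa [show m + 3 + 2 = m + 5 from rfl]) (by rw [show m+3+2 = m+5 from rfl])
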